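/- The positive zeros of F_k for odd k converge to 1/2: for every ε > 0 there exists K such that for every odd natural number k ≥ K and every real a ∈ (0,1) with F_k(a) = 0, one has |a - 1/2| < ε. -/

import Mathlib

open Real
open scoped Nat

noncomputable def gfun (k : ℕ) (x : ℝ) : ℝ :=
  2 ^ (k + 1) / (k + 1)! * bernoulliFun (k + 1) ((x + 1) / 2)

lemma gfun_zero (x : ℝ) : gfun 0 x = x := by
  simp [gfun, bernoulliFun_one]
  ring

lemma gfun_hasDeriv (k : ℕ) (x : ℝ) :
    HasDerivAt (gfun (k + 1)) (gfun k x) x := by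
  have aff : HasDerivAt (fun y : ℝ => (y + 1) / 2) (1/2) x := by
    simpa using ((hasDerivAt_id x).add_const 1).div_const 2
  have h := ((hasDerivAt_bernoulliFun (k + 2) ((x + 1) / 2)).comp x aff).const_mul
    ((2:ℝ) ^ (k + 2) / (k + 2)!)
  have heq : gfun (k + 1) = fun y : ℝ =>
      (2:ℝ) ^ (k + 2) / (k + 2)! * (bernoulliFun (k + 2) ∘ fun y : ℝ => (y + 1) / 2) y := by
    funext y; simp [gfun, Function.comp]
  rw [heq]
  refine h.congr_deriv ?_
  symm
  show gfun k x = _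
  rw [gfun]
  have : ((k:ℕ) + 2 - 1) = k + 1 := rfl
  rw [this]
  have hfac : ((k + 2)! : ℝ) = (k + 2) * (k + 1)! := by
    rw [Nat.factorial_succ]; push_cast; ring
  rw [hfac]
  have h1 : ((k:ℝ) + 2) ≠ 0 := by positivity
  have h2 : ((k + 1)! : ℝ) ≠ 0 := by positivity
  field_simp
  push_cast
  ring

lemma gfun_continuous (k : ℕ) : Continuous (gfun k) := by
  apply Continuous.mul continuous_const
  exact (Polynomial.continuous _).comp (by continuity)

lemma gfun_integral (k : ℕ) : ∫ x in (-1:ℝ)..1, gfun (k + 1) x = 0 := by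
  rw [intervalIntegral.integral_eq_sub_of_hasDerivAt
      (fun x _ => gfun_hasDeriv (k + 1) x)
      ((gfun_continuous (k+1)).intervalIntegrable _ _)]
  have h1 : ((1:ℝ) + 1) / 2 = 1 := by norm_num
  have h2 : ((-1:ℝ) + 1) / 2 = 0 := by norm_num
  rw [gfun, gfun, h1, h2, bernoulliFun_endpoints_eq_of_ne_one (by omega : k + 2 + 1 ≠ 1)]
  ring

lemma F_eq_gfun (F : ℕ → Polynomial ℝ)
    (hF0 : F 0 = Polynomial.X)
    (hFd : ∀ k : ℕ, Polynomial.derivative (F (k + 1)) = F k)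
    (hFi : ∀ k : ℕ, ∫ x in (-1 : ℝ)..1, (F (k + 1)).eval x = 0) :
    ∀ k x, (F k).eval x = gfun k x := by
  intro k
  induction k with
  | zero => intro x; rw [hF0, gfun_zero, Polynomial.eval_X]
  | succ k ih =>
    -- difference has zero derivative, hence constant
    have hd : ∀ x : ℝ, HasDerivAt (fun y => (F (k+1)).eval y - gfun (k+1) y) 0 x := by
      intro x
      have h1 : HasDerivAt (fun y => (F (k+1)).eval y) ((F k).eval x) x := by
        have := (F (k+1)).hasDerivAt x
        rwa [hFd k] at this
      rw [ih x] at h1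
      have h2 := h1.sub (gfun_hasDeriv k x)
      rw [sub_self] at h2
      exact h2
    have hconst : ∀ x : ℝ, (F (k+1)).eval x - gfun (k+1) x
        = (F (k+1)).eval 0 - gfun (k+1) 0 := by
      intro x
      exact is_const_of_deriv_eq_zero (fun y => (hd y).differentiableAt)
        (fun y => (hd y).deriv) x 0
    set C := (F (k+1)).eval 0 - gfun (k+1) 0 with hC
    have hint : ∫ x in (-1:ℝ)..1, ((F (k+1)).eval x - gfun (k+1) x) = 2 * C := by
      rw [intervalIntegral.integral_congr (g := fun _ => C) (fun x _ => hconst x)]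
      rw [intervalIntegral.integral_const]
      norm_num
    rw [intervalIntegral.integral_sub
        ((Polynomial.continuous _).intervalIntegrable _ _)
        ((gfun_continuous _).intervalIntegrable _ _), hFi k, gfun_integral k] at hint
    have : C = 0 := by simpa using hint.symm
    intro x
    have := hconst x
    rw [← hC, this] at *
    linarith [hconst x]

lemma cos_small {m : ℕ} (hm : m ≠ 0) {t : ℝ} (ht : t ∈ Set.Icc (0:ℝ) 1)
    (hB : bernoulliFun (2 * m) t = 0) :
    |Real.cos (2 * π * t)| ≤ (1/2 : ℝ) ^ (2 * m - 2) := by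
  have h := hasSum_one_div_nat_pow_mul_cos hm ht
  rw [show (Polynomial.map (algebraMap ℚ ℝ) (Polynomial.bernoulli (2*m))).eval t
      = bernoulliFun (2*m) t from rfl, hB, mul_zero] at h
  set f : ℕ → ℝ := fun n => 1 / (n : ℝ) ^ (2 * m) * Real.cos (2 * π * n * t) with hf
  have hshift : HasSum (fun n => f (n + 2)) (0 - ∑ i ∈ Finset.range 2, f i) := by
    rw [hasSum_nat_add_iff 2]
    rw [sub_add_cancel]
    exact h
  have hf0 : f 0 = 0 := by
    simp [hf, zero_pow (by omega : 2 * m ≠ 0)]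
  have hf1 : f 1 = Real.cos (2 * π * t) := by
    simp [hf]
  have hsum2 : ∑ i ∈ Finset.range 2, f i = Real.cos (2 * π * t) := by
    rw [Finset.sum_range_succ, Finset.sum_range_one, hf0, hf1]; ring
  rw [hsum2, zero_sub] at hshift
  -- bound each term
  have hbound : ∀ n : ℕ, |f (n + 2)| ≤ (1/2:ℝ) ^ (2*m - 2) * (1 / ((n:ℝ) + 2) ^ 2) := by
    intro n
    have hn2 : (0:ℝ) < ((n:ℝ) + 2) := by positivity
    have h1 : |f (n + 2)| ≤ 1 / ((n:ℝ) + 2) ^ (2 * m) := by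
      rw [hf, abs_mul]
      push_cast
      have : |1 / ((n:ℝ) + 2) ^ (2*m)| = 1 / ((n:ℝ) + 2) ^ (2*m) := by
        rw [abs_of_nonneg]; positivity
      rw [this]
      nlinarith [Real.abs_cos_le_one (2 * π * ((n:ℝ)+2) * t),
        one_div_pos.mpr (pow_pos hn2 (2*m))]
    refine h1.trans ?_
    have hsplit : ((n:ℝ) + 2) ^ (2 * m) = ((n:ℝ)+2) ^ (2*m - 2) * ((n:ℝ)+2) ^ 2 := by
      rw [← pow_add]
      congr 1
      omega
    rw [hsplit, one_div, mul_inv, div_eq_mul_inv, div_eq_mul_inv, one_mul, one_mul]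
    have e1 : (((n:ℝ)+2) ^ (2*m-2))⁻¹ ≤ ((1:ℝ)/2) ^ (2*m-2) := by
      rw [← inv_pow]
      refine pow_le_pow_left₀ (by positivity) ?_ _
      rw [show ((1:ℝ)/2) = (2:ℝ)⁻¹ by norm_num]
      exact inv_anti₀ (by norm_num) (by linarith [Nat.cast_nonneg (α := ℝ) n])
    have e2 : (0:ℝ) ≤ (((n:ℝ)+2) ^ 2)⁻¹ := by positivity
    calc (((n:ℝ)+2) ^ (2*m-2))⁻¹ * (((n:ℝ)+2) ^ 2)⁻¹
        ≤ ((1:ℝ)/2) ^ (2*m-2) * (((n:ℝ)+2) ^ 2)⁻¹ := mul_le_mul_of_nonneg_right e1 e2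
      _ = 2⁻¹ ^ (2*m-2) * (((n:ℝ)+2) ^ 2)⁻¹ := by norm_num
  -- summability of the bound
  have hb : HasSum (fun n : ℕ => 1 / ((n:ℝ) + 2) ^ 2) (π^2/6 - 1) := by
    have h3 : HasSum (fun n : ℕ => 1 / (((n+2) : ℕ):ℝ) ^ 2)
        (π^2/6 - ∑ i ∈ Finset.range 2, 1/((i:ℕ):ℝ)^2) :=
      (hasSum_nat_add_iff (f := fun n : ℕ => 1/((n:ℕ):ℝ)^2) 2).mpr
        (by rw [sub_add_cancel]; exact hasSum_zeta_two)
    have hS : ∑ i ∈ Finset.range 2, 1/((i:ℕ):ℝ)^2 = 1 := by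
      norm_num [Finset.sum_range_succ]
    rw [hS] at h3
    convert h3 using 2 with n
    push_cast
    ring
  have hsb : Summable (fun n : ℕ => (1/2:ℝ) ^ (2*m-2) * (1 / ((n:ℝ) + 2) ^ 2)) :=
    hb.summable.mul_left _
  have habs : Summable (fun n : ℕ => |f (n + 2)|) :=
    Summable.of_nonneg_of_le (fun n => abs_nonneg _) hbound hsb
  have key : |Real.cos (2 * π * t)| ≤ ∑' n : ℕ, (1/2:ℝ) ^ (2*m-2) * (1 / ((n:ℝ) + 2) ^ 2) := by
    calc |Real.cos (2 * π * t)| = ‖-Real.cos (2 * π * t)‖ := by rw [norm_neg]; rfl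
      _ = ‖∑' n : ℕ, f (n + 2)‖ := by rw [hshift.tsum_eq]
      _ ≤ ∑' n : ℕ, ‖f (n + 2)‖ := norm_tsum_le_tsum_norm habs
      _ ≤ ∑' n : ℕ, (1/2:ℝ) ^ (2*m-2) * (1 / ((n:ℝ) + 2) ^ 2) :=
          Summable.tsum_le_tsum hbound habs hsb
  have hval : ∑' n : ℕ, (1/2:ℝ) ^ (2*m-2) * (1 / ((n:ℝ) + 2) ^ 2)
      = (1/2:ℝ) ^ (2*m-2) * (π^2/6 - 1) := by
    rw [tsum_mul_left, hb.tsum_eq]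
  have hpi : π^2/6 - 1 ≤ 1 := by nlinarith [Real.pi_lt_d2, Real.pi_pos]
  calc |Real.cos (2 * π * t)| ≤ (1/2:ℝ) ^ (2*m-2) * (π^2/6 - 1) := by rw [← hval]; exact key
    _ ≤ (1/2:ℝ) ^ (2*m-2) * 1 := by
        apply mul_le_mul_of_nonneg_left hpi (by positivity)
    _ = (1/2:ℝ) ^ (2*m-2) := mul_one _


/-- Let `F 0 = X` and, inductively, `F (k+1)` be the unique polynomial
with derivative `F k` and mean zero on `[-1,1]`.  The positive zeros of `F k` for odd `k`
converge to `1/2`: for every `ε > 0` there is `K` such that for every odd `k ≥ K` and every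
`a ∈ (0,1)` with `F k (a) = 0`, one has `|a - 1/2| < ε`. -/
theorem stmt3 (F : ℕ → Polynomial ℝ)
    (hF0 : F 0 = Polynomial.X)
    (hFd : ∀ k : ℕ, Polynomial.derivative (F (k + 1)) = F k)
    (hFi : ∀ k : ℕ, ∫ x in (-1 : ℝ)..1, (F (k + 1)).eval x = 0) :
    ∀ ε : ℝ, 0 < ε → ∃ K : ℕ, ∀ k : ℕ, K ≤ k → Odd k →
      ∀ a : ℝ, 0 < a → a < 1 → (F k).eval a = 0 → |a - 1 / 2| < ε := by
  intro ε hε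
  obtain ⟨N, hN⟩ := exists_pow_lt_of_lt_one hε (by norm_num : (1/2:ℝ) < 1)
  refine ⟨N + 3, fun k hk hodd a ha0 ha1 hz => ?_⟩
  obtain ⟨j, hj⟩ := hodd
  set m := j + 1 with hm
  have hk1 : k + 1 = 2 * m := by omega
  have heval := F_eq_gfun F hF0 hFd hFi k a
  rw [hz] at heval
  have hc : (2:ℝ)^(k+1)/(k+1)! ≠ 0 := by positivity
  have hB : bernoulliFun (k + 1) ((a+1)/2) = 0 := by
    rcases mul_eq_zero.mp heval.symm with h | h
    · exact absurd h hc
    · exact h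
  rw [hk1] at hB
  have ht : (a+1)/2 ∈ Set.Icc (0:ℝ) 1 := ⟨by linarith, by linarith⟩
  have hcos := cos_small (by omega : m ≠ 0) ht hB
  have hc2 : Real.cos (2 * π * ((a+1)/2)) = -Real.cos (π * a) := by
    rw [show 2 * π * ((a+1)/2) = π * a + π by ring, Real.cos_add_pi]
  rw [hc2, abs_neg] at hcos
  have hsin : |Real.cos (π * a)| = |Real.sin (π * (a - 1/2))| := by
    rw [show π * (a - 1/2) = π * a - π/2 by ring, Real.sin_sub_pi_div_two, abs_neg]
  have habs2 : |a - 1/2| ≤ 1/2 := abs_le.mpr ⟨by linarith, by linarith⟩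
  have habs : |π * (a - 1/2)| ≤ π / 2 := by
    rw [abs_mul, abs_of_pos Real.pi_pos]
    nlinarith [Real.pi_pos]
  have hJ := Real.mul_abs_le_abs_sin habs
  have h2a : 2 * |a - 1/2| ≤ |Real.sin (π * (a - 1/2))| := by
    have he : 2/π * |π * (a - 1/2)| = 2 * |a - 1/2| := by
      rw [abs_mul, abs_of_pos Real.pi_pos, ← mul_assoc,
        div_mul_cancel₀ (2:ℝ) Real.pi_ne_zero]
    linarith [hJ, he ▸ hJ]
  have hpow : ((1:ℝ)/2)^(2*m-2) ≤ (1/2:ℝ)^N :=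
    pow_le_pow_of_le_one (by norm_num) (by norm_num) (by omega)
  have : 2 * |a - 1/2| < ε := by
    calc 2 * |a - 1/2| ≤ |Real.sin (π * (a - 1/2))| := h2a
      _ = |Real.cos (π * a)| := hsin.symm
      _ ≤ ((1:ℝ)/2)^(2*m-2) := hcos
      _ ≤ (1/2:ℝ)^N := hpow
      _ < ε := hN
  linarith [abs_nonneg (a - 1/2)]
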